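/- arXiv:2506.21729 — 4 statements merged into one kernel-verified Lean document; each statement's English description precedes it below -/
import Mathlib

section
/- Let x and y be non-central elements of SU(2). Then x and y commute if and only if their centralizer subgroups in SU(2) coincide. -/
/-- `SU(2)`: the group of 2×2 complex unitary matrices of determinant 1,
realized as the kernel of the determinant on the unitary group. -/
noncomputable def SU2 : Subgroup ↥(Matrix.unitaryGroup (Fin 2) ℂ) :=
  MonoidHom.ker (Matrix.detMonoidHom.comp (Matrix.unitaryGroup (Fin 2) ℂ).subtype)

/-- The underlying matrix of an element of `SU(2)`. -/
def SU2.mat (A : SU2) : Matrix (Fin 2) (Fin 2) ℂ := A.val.val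

open ComplexConjugate in
lemma SU2.struct (A : SU2) :
    SU2.mat A 1 0 = -conj (SU2.mat A 0 1) ∧ SU2.mat A 1 1 = conj (SU2.mat A 0 0) ∧
    (SU2.mat A).det = 1 := by
  have hdet : (SU2.mat A).det = 1 := A.property
  have hu : SU2.mat A * star (SU2.mat A) = 1 := by
    have := A.val.property
    rw [Matrix.mem_unitaryGroup_iff] at this
    exact this
  have hadj : SU2.mat A * (SU2.mat A).adjugate = 1 := by
    rw [Matrix.mul_adjugate, hdet, one_smul]
  have h1 : (SU2.mat A)⁻¹ = star (SU2.mat A) := Matrix.inv_eq_right_inv hu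
  have h2 : (SU2.mat A)⁻¹ = (SU2.mat A).adjugate := Matrix.inv_eq_right_inv hadj
  have hs : star (SU2.mat A) = (SU2.mat A).adjugate := h1 ▸ h2
  have e01 := congrFun (congrFun hs 0) 1
  have e00 := congrFun (congrFun hs 0) 0
  rw [Matrix.adjugate_fin_two] at e01 e00
  simp [Matrix.star_apply] at e01 e00
  refine ⟨?_, e00.symm, hdet⟩
  have := congrArg (starRingEnd ℂ) e01
  simpa using this

open ComplexConjugate in
lemma SU2.key (z g h : SU2) (hz : SU2.mat z ≠ 1 ∧ SU2.mat z ≠ -1)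
    (hg : SU2.mat g * SU2.mat z = SU2.mat z * SU2.mat g)
    (hh : SU2.mat h * SU2.mat z = SU2.mat z * SU2.mat h) :
    SU2.mat g * SU2.mat h = SU2.mat h * SU2.mat g := by
  obtain ⟨z10, z11, zdet⟩ := SU2.struct z
  obtain ⟨g10, g11, -⟩ := SU2.struct g
  obtain ⟨h10, h11, -⟩ := SU2.struct h
  set a := SU2.mat z 0 0 with ha
  set b := SU2.mat z 0 1 with hb
  set c := SU2.mat g 0 0 with hc
  set d := SU2.mat g 0 1 with hd
  set e := SU2.mat h 0 0 with he
  set f := SU2.mat h 0 1 with hf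
  have E1 := congrFun (congrFun hg 0) 0
  have E2 := congrFun (congrFun hg 0) 1
  have E3 := congrFun (congrFun hh 0) 0
  have E4 := congrFun (congrFun hh 0) 1
  simp only [Matrix.mul_apply, Fin.sum_univ_two, z10, z11, g10, g11, h10, h11,
    ← ha, ← hb, ← hc, ← hd, ← he, ← hf] at E1 E2 E3 E4
  -- E1 : c*a + d*(-conj b) = a*c + b*(-conj d)
  -- E2 : c*b + d*(conj a) = a*d + b*(conj c)
  have P1 : conj d * f = conj f * d ∧ c * f + d * conj e = e * d + f * conj c := by
    by_cases hb0 : b = 0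
    · have haa : a - conj a ≠ 0 := by
        intro haa
        have haconj : conj a = a := by linear_combination -haa
        have ha2 : a * a = 1 := by
          have hdet2 : a * conj a + b * conj b = 1 := by
            have := zdet
            rw [Matrix.det_fin_two, z10, z11, ← ha, ← hb] at this
            linear_combination this
          rw [haconj, hb0] at hdet2
          simpa using hdet2
        rcases mul_self_eq_one_iff.mp ha2 with h' | h'
        · apply hz.1
          ext i j
          fin_cases i <;> fin_cases j <;>
            simp [Matrix.one_apply, z10, z11, ← ha, ← hb, hb0, h', haconj]
        · apply hz.2
          ext i j
          fin_cases i <;> fin_cases j <;>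
            simp [Matrix.one_apply, z10, z11, ← ha, ← hb, hb0, h', haconj]
      have hd0 : d = 0 := by
        have : d * (a - conj a) = 0 := by linear_combination -E2 + (c - conj c) * hb0
        rcases mul_eq_zero.mp this with h' | h'
        · exact h'
        · exact absurd h' haa
      have hf0 : f = 0 := by
        have : f * (a - conj a) = 0 := by linear_combination -E4 + (e - conj e) * hb0
        rcases mul_eq_zero.mp this with h' | h'
        · exact h'
        · exact absurd h' haa
      rw [hd0, hf0]; constructor <;> simp
    · have hbc0 : conj b ≠ 0 := by simpa using hb0
      constructor
      · apply mul_left_cancel₀ (mul_ne_zero hb0 hbc0)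
        linear_combination (conj f * b) * E1 - (conj d * b) * E3
      · apply mul_left_cancel₀ hb0
        linear_combination f * E2 - d * E4
  obtain ⟨P1, P2⟩ := P1
  have Q1 := congrArg conj P1
  have Q2 := congrArg conj P2
  simp only [map_mul, map_add, RingHomCompTriple.comp_apply, RingHom.id_apply] at Q1 Q2
  ext i j
  fin_cases i <;> fin_cases j <;>
    simp only [Matrix.mul_apply, Fin.sum_univ_two, g10, g11, h10, h11,
      ← hc, ← hd, ← he, ← hf, Fin.isValue, Fin.zero_eta, Fin.mk_one]
  · linear_combination -Q1
  · linear_combination P2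
  · linear_combination -Q2
  · linear_combination -P1

lemma SU2.mat_inj {u v : SU2} (h : SU2.mat u = SU2.mat v) : u = v :=
  Subtype.ext (Subtype.ext h)

lemma SU2.mat_mul (u v : SU2) : SU2.mat (u * v) = SU2.mat u * SU2.mat v := rfl

/-- Two non-central elements of `SU(2)` commute if and only if their centralizer
subgroups coincide. -/
theorem noncentral_commute_iff_centralizer_eq (x y : SU2)
    (hx : SU2.mat x ≠ 1 ∧ SU2.mat x ≠ -1)
    (hy : SU2.mat y ≠ 1 ∧ SU2.mat y ≠ -1) :
    Commute x y ↔ Subgroup.centralizer {x} = Subgroup.centralizer {y} := by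
  constructor
  · intro hcomm
    have hxy : SU2.mat x * SU2.mat y = SU2.mat y * SU2.mat x := by
      rw [← SU2.mat_mul, ← SU2.mat_mul, hcomm]
    ext g
    simp only [Subgroup.mem_centralizer_singleton_iff]
    constructor
    · intro hgx
      have hgx' : SU2.mat g * SU2.mat x = SU2.mat x * SU2.mat g := by
        rw [← SU2.mat_mul, ← SU2.mat_mul, hgx]
      have hyx : SU2.mat y * SU2.mat x = SU2.mat x * SU2.mat y := hxy.symm
      have := SU2.key x g y hx hgx' hyx
      exact SU2.mat_inj (by rw [SU2.mat_mul, SU2.mat_mul, this])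
    · intro hgy
      have hgy' : SU2.mat g * SU2.mat y = SU2.mat y * SU2.mat g := by
        rw [← SU2.mat_mul, ← SU2.mat_mul, hgy]
      have := SU2.key y g x hy hgy' hxy
      exact SU2.mat_inj (by rw [SU2.mat_mul, SU2.mat_mul, this])
  · intro hcent
    have hxmem : x ∈ Subgroup.centralizer {x} :=
      Subgroup.mem_centralizer_singleton_iff.mpr rfl
    rw [hcent, Subgroup.mem_centralizer_singleton_iff] at hxmem
    exact hxmem
end

section
/- Let G = ⟨x₁, x₂, z, h | [x₁,h] = [x₂,h] = 1, x₁x₂z² = 1, zhz⁻¹h = 1⟩. For any θ₁ ∈ ℝ and ψ₁ ∉ πℤ, there exists an irreducible representation ρ : G → SU(2) with ρ(x₁) = diag(e^{iθ₁}, e^{-iθ₁}), ρ(h) = diag(e^{iψ₁}, e^{-iψ₁}), and ρ(x₂) = diag(e^{i(π-θ₁)}, e^{-i(π-θ₁)}). -/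
/-- The diagonal matrix `diag(e^{iθ}, e^{-iθ})`. -/
noncomputable def diagU (θ : ℝ) : Matrix (Fin 2) (Fin 2) ℂ :=
  !![Complex.exp (θ * Complex.I), 0; 0, Complex.exp (-(θ * Complex.I))]

/-- Relations of `π₁(C₂) = ⟨x₁,x₂,z,h | [x₁,h], [x₂,h], x₁x₂z², zhz⁻¹h⟩`
(generators `0,1,2,3` standing for `x₁,x₂,z,h`). -/
def C2rels : Set (FreeGroup (Fin 4)) :=
  { FreeGroup.of 0 * FreeGroup.of 3 * (FreeGroup.of 0)⁻¹ * (FreeGroup.of 3)⁻¹,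
    FreeGroup.of 1 * FreeGroup.of 3 * (FreeGroup.of 1)⁻¹ * (FreeGroup.of 3)⁻¹,
    FreeGroup.of 0 * FreeGroup.of 1 * (FreeGroup.of 2) ^ 2,
    FreeGroup.of 2 * FreeGroup.of 3 * (FreeGroup.of 2)⁻¹ * FreeGroup.of 3 }

/-- The fundamental group of `C₂`, the twisted I-bundle over a once-punctured
Möbius band. -/
def C2 := PresentedGroup C2rels

instance : Group C2 := by unfold C2; infer_instance

def c2x₁ : C2 := PresentedGroup.of 0
def c2x₂ : C2 := PresentedGroup.of 1
def c2z : C2 := PresentedGroup.of 2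
def c2h : C2 := PresentedGroup.of 3

/-! Send `x₁, x₂, h` to diagonal elements of `SU(2)` and `z` to the Weyl element
`w = [[0, 1], [-1, 0]]`. Diagonal elements commute, `w` conjugates `diag θ` to `diag (-θ)` and
`w² = -1 = diag (-π)`, so the relations hold. The image is non-abelian because `w` commutes with
`diag ψ` only if `e^{iψ} = e^{-iψ}`, i.e. `ψ ∈ πℤ`. -/

namespace C2

variable {G : Type*} [Group G]

def lift (x₁ x₂ z h : G) (hx₁ : Commute x₁ h) (hx₂ : Commute x₂ h) (hz : x₁ * x₂ * z ^ 2 = 1)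
    (hh : z * h * z⁻¹ = h⁻¹) : C2 →* G :=
  PresentedGroup.toGroup (f := ![x₁, x₂, z, h]) <| by
    rintro r (rfl | rfl | rfl | rfl)
    · simpa [commutatorElement_def] using commutatorElement_eq_one_iff_commute.mpr hx₁
    · simpa [commutatorElement_def] using commutatorElement_eq_one_iff_commute.mpr hx₂
    · simpa using hz
    · simp [hh]

section
variable {x₁ x₂ z h : G} {hx₁ : Commute x₁ h} {hx₂ : Commute x₂ h}
  {hz : x₁ * x₂ * z ^ 2 = 1} {hh : z * h * z⁻¹ = h⁻¹}

@[simp] lemma lift_x₁ : lift x₁ x₂ z h hx₁ hx₂ hz hh c2x₁ = x₁ :=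
  PresentedGroup.toGroup.of _
@[simp] lemma lift_x₂ : lift x₁ x₂ z h hx₁ hx₂ hz hh c2x₂ = x₂ :=
  PresentedGroup.toGroup.of _
@[simp] lemma lift_z : lift x₁ x₂ z h hx₁ hx₂ hz hh c2z = z :=
  PresentedGroup.toGroup.of _
@[simp] lemma lift_h : lift x₁ x₂ z h hx₁ hx₂ hz hh c2h = h :=
  PresentedGroup.toGroup.of _

end

end C2

lemma Matrix.star_fin_two {α : Type*} [Star α] (a b c d : α) :
    star !![a, b; c, d] = !![star a, star c; star b, star d] := by
  ext i j; fin_cases i <;> fin_cases j <;> rfl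

lemma star_diagU (θ : ℝ) : star (diagU θ) = diagU (-θ) := by
  simp [diagU, Matrix.star_fin_two, ← Complex.exp_conj]

lemma diagU_add (θ θ' : ℝ) : diagU (θ + θ') = diagU θ * diagU θ' := by
  simp [diagU, ← Complex.exp_add, add_mul, add_comm]

lemma diagU_zero : diagU 0 = 1 := by
  simp [diagU, Matrix.one_fin_two]

lemma det_diagU (θ : ℝ) : (diagU θ).det = 1 := by
  simp [diagU, Matrix.det_fin_two_of, ← Complex.exp_add]

namespace SU2

lemma ext {A B : SU2} (h : mat A = mat B) : A = B :=
  Subtype.ext (Subtype.ext h)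

@[simp] lemma mat_mul_s13 (A B : SU2) : mat (A * B) = mat A * mat B := rfl

def ofMatrix (A : Matrix (Fin 2) (Fin 2) ℂ) (hA : A * star A = 1) (hdet : A.det = 1) : SU2 :=
  ⟨⟨A, Matrix.mem_unitaryGroup_iff.mpr hA⟩, by simp [SU2, hdet]⟩

@[simp] lemma mat_ofMatrix (A : Matrix (Fin 2) (Fin 2) ℂ) (hA : A * star A = 1)
    (hdet : A.det = 1) : mat (ofMatrix A hA hdet) = A := rfl

noncomputable def diag (θ : ℝ) : SU2 :=
  ofMatrix (diagU θ) (by rw [star_diagU, ← diagU_add, add_neg_cancel, diagU_zero]) (det_diagU θ)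

@[simp] lemma mat_diag (θ : ℝ) : mat (diag θ) = diagU θ := rfl

lemma diag_add (θ θ' : ℝ) : diag (θ + θ') = diag θ * diag θ' :=
  ext (diagU_add θ θ')

lemma diag_zero : diag 0 = 1 :=
  ext diagU_zero

lemma diag_neg (θ : ℝ) : diag (-θ) = (diag θ)⁻¹ :=
  eq_inv_of_mul_eq_one_left (by rw [← diag_add, neg_add_cancel, diag_zero])

lemma commute_diag (θ θ' : ℝ) : Commute (diag θ) (diag θ') := by
  rw [Commute, SemiconjBy, ← diag_add, ← diag_add, add_comm]

noncomputable def weyl : SU2 :=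
  ofMatrix !![0, 1; -1, 0]
    (by simp [Matrix.star_fin_two, Matrix.one_fin_two])
    (by simp [Matrix.det_fin_two_of])

lemma weyl_mul_diag (θ : ℝ) : weyl * diag θ = diag (-θ) * weyl :=
  ext (by simp [weyl, diagU])

lemma weyl_sq : weyl ^ 2 = diag (-Real.pi) :=
  ext (by simp [pow_two, weyl, diagU, Complex.exp_neg, Complex.exp_pi_mul_I])

lemma not_commute_weyl_diag {θ : ℝ} (hθ : ∀ n : ℤ, θ ≠ n * Real.pi) :
    ¬ Commute weyl (diag θ) := by
  intro hc
  have hinv : diag (-θ) = diag θ := mul_right_cancel ((weyl_mul_diag θ).symm.trans hc.eq)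
  have hexp : Complex.exp (-θ * Complex.I) = Complex.exp (θ * Complex.I) := by
    simpa [diagU, neg_mul] using congrArg (fun A : SU2 => mat A 0 0) hinv
  obtain ⟨n, hn⟩ := Complex.exp_eq_exp_iff_exists_int.mp hexp
  have him : -θ = θ + n * (2 * Real.pi) := by
    simpa [mul_comm, mul_assoc] using congrArg Complex.im hn
  exact hθ (-n) (by push_cast; linarith)

end SU2

open SU2 in
noncomputable def C2.diagRep (θ ψ : ℝ) : C2 →* SU2 :=
  C2.lift (diag θ) (diag (Real.pi - θ)) weyl (diag ψ) (commute_diag _ _) (commute_diag _ _)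
    (by rw [weyl_sq, ← diag_add, ← diag_add, add_sub_cancel, add_neg_cancel, diag_zero])
    (by rw [weyl_mul_diag, mul_inv_cancel_right, diag_neg])

/-- For any `θ₁ ∈ ℝ` and `ψ₁ ∉ πℤ`, there exists an irreducible representation
`ρ : π₁(C₂) → SU(2)` with `ρ(x₁) = diag(e^{iθ₁}, e^{-iθ₁})`,
`ρ(h) = diag(e^{iψ₁}, e^{-iψ₁})` and `ρ(x₂) = diag(e^{i(π-θ₁)}, e^{-i(π-θ₁)})`. -/
theorem exists_irreducible_rep_C2 (θ₁ ψ₁ : ℝ) (hψ : ∀ n : ℤ, ψ₁ ≠ n * Real.pi) :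
    ∃ ρ : C2 →* SU2, (¬ ∀ g g' : C2, Commute (ρ g) (ρ g')) ∧
      SU2.mat (ρ c2x₁) = diagU θ₁ ∧ SU2.mat (ρ c2h) = diagU ψ₁ ∧
      SU2.mat (ρ c2x₂) = diagU (Real.pi - θ₁) := by
  refine ⟨C2.diagRep θ₁ ψ₁, fun hcomm => SU2.not_commute_weyl_diag hψ ?_, ?_, ?_, ?_⟩
  · simpa [C2.diagRep] using hcomm c2z c2h
  all_goals simp [C2.diagRep]
end

section
/- Let G = ⟨x₁, x₂, z, h | [x₁,h] = [x₂,h] = 1, x₁x₂z² = 1, zhz⁻¹h = 1⟩. Suppose ψ₁ ∈ πℤ and θ₁ ∉ πℤ. Then for every θ₂ ∈ (0,π) ∪ (π,2π), there exists an irreducible representation ρ : G → SU(2) with ρ(x₁) = diag(e^{iθ₁}, e^{-iθ₁}), ρ(h) = diag(e^{iψ₁}, e^{-iψ₁}), and Tr ρ(x₂) = 2cos θ₂. -/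
open Matrix Complex

lemma aux_ch2 (M : Matrix (Fin 2) (Fin 2) ℂ) : M * M = M.trace • M - M.det • 1 := by
  rw [Matrix.eta_fin_two M]
  ext i j
  fin_cases i <;> fin_cases j <;>
    simp [Matrix.mul_apply, Fin.sum_univ_two, Matrix.trace_fin_two, Matrix.det_fin_two,
      Matrix.one_apply] <;> ring

lemma aux_det_add_one (M : Matrix (Fin 2) (Fin 2) ℂ) : (M + 1).det = M.det + M.trace + 1 := by
  rw [Matrix.eta_fin_two M]
  simp [Matrix.det_fin_two, Matrix.trace_fin_two]
  ring

lemma aux_sqrtSU2 (M : Matrix (Fin 2) (Fin 2) ℂ) (hU : M ∈ Matrix.unitaryGroup (Fin 2) ℂ)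
    (hdet : M.det = 1) (t : ℝ) (ht : M.trace = (t : ℂ)) (htpos : 0 < t + 2) :
    ∃ S : Matrix (Fin 2) (Fin 2) ℂ,
      S ∈ Matrix.unitaryGroup (Fin 2) ℂ ∧ S.det = 1 ∧ S * S = M := by
  set r : ℝ := Real.sqrt (t + 2) with hrdef
  have hrr : r * r = t + 2 := Real.mul_self_sqrt htpos.le
  have hr2 : (r : ℂ) * r = (t : ℂ) + 2 := by exact_mod_cast congrArg (Complex.ofReal) hrr
  have hrne : (r : ℂ) ≠ 0 := by
    simp only [ne_eq, Complex.ofReal_eq_zero]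
    exact (Real.sqrt_pos.mpr htpos).ne'
  have hscal : ((r : ℂ))⁻¹ * (r : ℂ)⁻¹ * ((r : ℂ) * (r : ℂ)) = 1 := by field_simp
  have hc := aux_ch2 M
  rw [ht, hdet] at hc
  have hMr : M * ((t : ℂ) • 1 - M) = 1 := by
    rw [mul_sub, hc, mul_smul_comm, mul_one]; module
  have hstar : star M = (t : ℂ) • (1 : Matrix (Fin 2) (Fin 2) ℂ) - M :=
    left_inv_eq_right_inv ((Matrix.mem_unitaryGroup_iff'.mp hU)) hMr
  have hstarr : star ((r : ℂ)⁻¹) = (r : ℂ)⁻¹ := by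
    rw [star_inv₀, Complex.star_def, Complex.conj_ofReal]
  refine ⟨(r : ℂ)⁻¹ • (M + 1), ?_, ?_, ?_⟩
  · rw [Matrix.mem_unitaryGroup_iff]
    rw [star_smul, smul_mul_smul_comm, hstarr]
    have hstar1 : star (M + 1) = (t : ℂ) • (1 : Matrix (Fin 2) (Fin 2) ℂ) - M + 1 := by
      rw [star_add, hstar, star_one]
    rw [hstar1]
    have key : (M + 1) * ((t : ℂ) • (1 : Matrix (Fin 2) (Fin 2) ℂ) - M + 1) =
        ((t : ℂ) + 2) • (1 : Matrix (Fin 2) (Fin 2) ℂ) := by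
      rw [mul_add, add_mul, add_mul, mul_sub, hc, mul_smul_comm]
      simp only [mul_one, one_mul]
      module
    rw [key, smul_smul, ← hr2, hscal, one_smul]
  · rw [Matrix.det_smul, aux_det_add_one, hdet, ht, Fintype.card_fin]
    rw [show (1 : ℂ) + t + 1 = (r : ℂ) * r by rw [hr2]; ring]
    rw [show ((r:ℂ)⁻¹) ^ 2 = (r:ℂ)⁻¹ * (r:ℂ)⁻¹ from sq _]
    rw [hscal]
  · rw [smul_mul_smul_comm]
    have key : (M + 1) * (M + 1) = ((t : ℂ) + 2) • M := by
      rw [mul_add, add_mul, hc]; simp only [mul_one, one_mul]; module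
    rw [key, smul_smul, ← hr2, hscal, one_smul]

set_option maxHeartbeats 2000000 in
/-- Suppose `ψ₁ ∈ πℤ` and `θ₁ ∉ πℤ`.  Then for every `θ₂ ∈ (0,π) ∪ (π,2π)` there is an
irreducible representation `ρ : π₁(C₂) → SU(2)` with `ρ(x₁) = diag(e^{iθ₁}, e^{-iθ₁})`,
`ρ(h) = diag(e^{iψ₁}, e^{-iψ₁})` and `Tr ρ(x₂) = 2cos θ₂`. -/
theorem exists_irreducible_rep_C2_central_h (θ₁ ψ₁ θ₂ : ℝ)
    (hψ : ∃ n : ℤ, ψ₁ = n * Real.pi) (hθ : ∀ n : ℤ, θ₁ ≠ n * Real.pi)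
    (hθ₂ : θ₂ ∈ Set.Ioo (0 : ℝ) Real.pi ∪ Set.Ioo Real.pi (2 * Real.pi)) :
    ∃ ρ : C2 →* SU2, (¬ ∀ g g' : C2, Commute (ρ g) (ρ g')) ∧
      SU2.mat (ρ c2x₁) = diagU θ₁ ∧ SU2.mat (ρ c2h) = diagU ψ₁ ∧
      Matrix.trace (SU2.mat (ρ c2x₂)) = ((2 * Real.cos θ₂ : ℝ) : ℂ) := by
  obtain ⟨n, hn⟩ := hψ
  set e : ℂ := Complex.exp (θ₁ * Complex.I) with he
  set e' : ℂ := Complex.exp (-(θ₁ * Complex.I)) with he'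
  have hee' : e * e' = 1 := by rw [he, he', ← Complex.exp_add]; simp
  have he'e : e' * e = 1 := by rw [he, he', ← Complex.exp_add]; simp
  have hconj_e : (starRingEnd ℂ) e = e' := by
    rw [he, he', ← Complex.exp_conj]
    congr 1
    simp [Complex.conj_ofReal]
  have hconj_e' : (starRingEnd ℂ) e' = e := by
    rw [he, he', ← Complex.exp_conj]
    congr 1
    simp [Complex.conj_ofReal]
  set c : ℝ := Real.cos θ₂ with hcdef
  set s : ℝ := Real.sin θ₂ with hsdef
  set B : Matrix (Fin 2) (Fin 2) ℂ := !![(c:ℂ), s*I; s*I, c] with hB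
  have hcs : (c:ℂ)*c + (s:ℂ)*s = 1 := by
    have h := Real.sin_sq_add_cos_sq θ₂
    norm_cast
    nlinarith [h]
  -- A facts
  have hAU : diagU θ₁ ∈ Matrix.unitaryGroup (Fin 2) ℂ := by
    rw [Matrix.mem_unitaryGroup_iff]
    ext i j
    fin_cases i <;> fin_cases j <;>
      simp [diagU, Matrix.mul_apply, Fin.sum_univ_two, Matrix.conjTranspose_apply,
        Matrix.one_apply, ← he, ← he', hconj_e, hconj_e', hee', he'e]
  have hdetA : (diagU θ₁).det = 1 := by
    simp [diagU, Matrix.det_fin_two_of, ← he, ← he', hee']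
  -- B facts
  have hBU : B ∈ Matrix.unitaryGroup (Fin 2) ℂ := by
    rw [Matrix.mem_unitaryGroup_iff]
    ext i j
    fin_cases i <;> fin_cases j <;>
      simp [hB, Matrix.mul_apply, Fin.sum_univ_two, Matrix.conjTranspose_apply,
        Matrix.one_apply, Complex.conj_ofReal] <;> ring_nf <;>
      simp [Complex.I_sq] <;> linear_combination hcs
  have hdetB : B.det = 1 := by
    simp [hB, Matrix.det_fin_two_of]
    ring_nf
    simp [Complex.I_sq]
    linear_combination hcs
  -- H facts
  set ε : ℂ := Complex.exp (ψ₁ * I) with hε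
  have hε2 : ε * ε = 1 := by
    rw [hε, ← Complex.exp_add,
      show (ψ₁:ℂ)*I + ψ₁*I = n*(2*Real.pi*I) by rw [hn]; push_cast; ring]
    exact Complex.exp_int_mul_two_pi_mul_I n
  have hεne : ε ≠ 0 := Complex.exp_ne_zero _
  have hεinv : Complex.exp (-(ψ₁ * I)) = ε := by
    have h1 : ε * Complex.exp (-(ψ₁*I)) = 1 := by rw [hε, ← Complex.exp_add]; simp
    exact mul_left_cancel₀ hεne (h1.trans hε2.symm)
  have hHscal : diagU ψ₁ = ε • (1 : Matrix (Fin 2) (Fin 2) ℂ) := by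
    ext i j
    fin_cases i <;> fin_cases j <;> simp [diagU, hεinv, Matrix.one_apply, hε]
  have hHU : diagU ψ₁ ∈ Matrix.unitaryGroup (Fin 2) ℂ := by
    rw [Matrix.mem_unitaryGroup_iff, hHscal]
    rw [star_smul, star_one, smul_mul_smul_comm, one_mul]
    rw [Complex.star_def, ← Complex.exp_conj]
    rw [show (starRingEnd ℂ) ((ψ₁:ℂ) * I) = -(ψ₁ * I) by simp [Complex.conj_ofReal]]
    rw [hεinv, hε2, one_smul]
  have hdetH : (diagU ψ₁).det = 1 := by
    rw [hHscal, Matrix.det_smul, Fintype.card_fin, Matrix.det_one, mul_one, sq, hε2]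
  -- trace of A*B and of M
  have hepe : e + e' = ((2*Real.cos θ₁ : ℝ):ℂ) := by
    rw [he, he', ← neg_mul, Complex.exp_mul_I, Complex.exp_mul_I]
    rw [Complex.cos_neg, Complex.sin_neg]
    push_cast [← Complex.ofReal_cos]
    ring
  set M : Matrix (Fin 2) (Fin 2) ℂ := star (diagU θ₁ * B) with hM
  have htrAB : (diagU θ₁ * B).trace = ((2*Real.cos θ₁ * c:ℝ):ℂ) := by
    have hepe' := hepe
    simp [Matrix.trace_fin_two, Matrix.mul_apply, Fin.sum_univ_two, diagU, hB, ← he, ← he']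
    push_cast at hepe' ⊢
    linear_combination (c:ℂ) * hepe'
  have htrM : M.trace = ((2*Real.cos θ₁ * c:ℝ):ℂ) := by
    rw [hM, Matrix.star_eq_conjTranspose, Matrix.trace_conjTranspose, htrAB,
      Complex.star_def, Complex.conj_ofReal]
  have hMU : M ∈ Matrix.unitaryGroup (Fin 2) ℂ := by
    rw [hM]
    exact Unitary.star_mem (mul_mem hAU hBU)
  have hdetM : M.det = 1 := by
    rw [hM, Matrix.star_eq_conjTranspose, Matrix.det_conjTranspose, Matrix.det_mul,
      hdetA, hdetB, mul_one, star_one]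
  -- positivity
  have hsinne : Real.sin θ₁ ≠ 0 := by
    intro h
    rcases Real.sin_eq_zero_iff.mp h with ⟨m, hm⟩
    exact hθ m hm.symm
  have hc1sq : Real.cos θ₁ ^ 2 < 1 := by
    have hpos : 0 < Real.sin θ₁ ^ 2 := by positivity
    nlinarith [Real.sin_sq_add_cos_sq θ₁, hpos]
  have hc2sq : c ^ 2 ≤ 1 := by
    nlinarith [Real.sin_sq_add_cos_sq θ₂, sq_nonneg s]
  have htpos : 0 < 2*Real.cos θ₁ * c + 2 := by
    nlinarith [sq_nonneg (Real.cos θ₁ + c)]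
  obtain ⟨Zm, hZU, hZdet, hZZ⟩ := aux_sqrtSU2 M hMU hdetM _ htrM htpos
  -- the three SU2 elements
  have memSU2 : ∀ (X : Matrix (Fin 2) (Fin 2) ℂ) (hX : X ∈ Matrix.unitaryGroup (Fin 2) ℂ),
      X.det = 1 → (⟨X, hX⟩ : Matrix.unitaryGroup (Fin 2) ℂ) ∈ SU2 := by
    intro X hX hdet
    rw [SU2, MonoidHom.mem_ker]
    simpa using hdet
  set aS : SU2 := ⟨⟨diagU θ₁, hAU⟩, memSU2 _ _ hdetA⟩ with haS
  set bS : SU2 := ⟨⟨B, hBU⟩, memSU2 _ _ hdetB⟩ with hbS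
  set hS : SU2 := ⟨⟨diagU ψ₁, hHU⟩, memSU2 _ _ hdetH⟩ with hhS
  set zS : SU2 := ⟨⟨Zm, hZU⟩, memSU2 _ _ hZdet⟩ with hzS
  -- SU2-level relations
  have ext2 : ∀ (x y : SU2), SU2.mat x = SU2.mat y → x = y := by
    intro x y h
    exact Subtype.ext (Subtype.ext h)
  have matmul : ∀ (x y : SU2), SU2.mat (x * y) = SU2.mat x * SU2.mat y := fun _ _ => rfl
  have hcomm_ah : aS * hS = hS * aS := by
    apply ext2
    rw [matmul, matmul]
    show diagU θ₁ * diagU ψ₁ = diagU ψ₁ * diagU θ₁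
    rw [hHscal, mul_smul_comm, smul_mul_assoc, mul_one, one_mul]
  have hcomm_bh : bS * hS = hS * bS := by
    apply ext2
    rw [matmul, matmul]
    show B * diagU ψ₁ = diagU ψ₁ * B
    rw [hHscal, mul_smul_comm, smul_mul_assoc, mul_one, one_mul]
  have hcomm_zh : zS * hS = hS * zS := by
    apply ext2
    rw [matmul, matmul]
    show Zm * diagU ψ₁ = diagU ψ₁ * Zm
    rw [hHscal, mul_smul_comm, smul_mul_assoc, mul_one, one_mul]
  have hh2 : hS * hS = 1 := by
    apply ext2
    rw [matmul]
    show diagU ψ₁ * diagU ψ₁ = 1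
    rw [hHscal, smul_mul_smul_comm, one_mul, hε2, one_smul]
  have habz : aS * bS * zS ^ 2 = 1 := by
    apply ext2
    rw [sq, matmul, matmul, matmul]
    show diagU θ₁ * B * (Zm * Zm) = 1
    rw [hZZ, hM, StarMul.star_mul, ← mul_assoc, mul_assoc (diagU θ₁) B (star B),
      Matrix.mem_unitaryGroup_iff.mp hBU, mul_one, Matrix.mem_unitaryGroup_iff.mp hAU]
  -- the representation
  set f : Fin 4 → SU2 := ![aS, bS, zS, hS] with hf
  have hrels : ∀ r ∈ C2rels, FreeGroup.lift f r = 1 := by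
    intro r hr
    simp only [C2rels, Set.mem_insert_iff, Set.mem_singleton_iff] at hr
    rcases hr with rfl | rfl | rfl | rfl <;>
      simp only [_root_.map_mul, _root_.map_inv, _root_.map_pow, FreeGroup.lift_apply_of, hf,
        Matrix.cons_val_zero, Matrix.cons_val_one, Matrix.head_cons,
        Matrix.cons_val_two, Matrix.tail_cons, Matrix.cons_val_three, Matrix.head_fin_const]
    · rw [hcomm_ah]; group
    · rw [hcomm_bh]; group
    · exact habz
    · rw [hcomm_zh, mul_assoc hS, mul_inv_cancel, mul_one]; exact hh2
  set ρ : C2 →* SU2 := PresentedGroup.toGroup hrels with hρdef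
  have hρ1 : ρ c2x₁ = aS := PresentedGroup.toGroup.of hrels
  have hρ2 : ρ c2x₂ = bS := PresentedGroup.toGroup.of hrels
  have hρ3 : ρ c2h = hS := PresentedGroup.toGroup.of hrels
  refine ⟨ρ, ?_, ?_, ?_, ?_⟩
  · intro hcom
    have := hcom c2x₁ c2x₂
    rw [hρ1, hρ2] at this
    have hmat : diagU θ₁ * B = B * diagU θ₁ := by
      have := congrArg SU2.mat this
      rwa [matmul, matmul] at this
    have hent := congrFun (congrFun hmat 0) 1
    simp [diagU, hB, Matrix.mul_apply, Fin.sum_univ_two, ← he, ← he'] at hent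
    -- hent : e * (s*I) = s*I*e' roughly
    have hsne : (s:ℂ) ≠ 0 := by
      simp only [ne_eq, Complex.ofReal_eq_zero]
      rcases hθ₂ with h | h
      · exact (Real.sin_pos_of_pos_of_lt_pi h.1 h.2).ne'
      · have : Real.sin (θ₂ - 2*Real.pi) < 0 := by
          apply Real.sin_neg_of_neg_of_neg_pi_lt <;> nlinarith [h.1, h.2, Real.pi_pos]
        rw [Real.sin_sub_two_pi] at this
        exact this.ne
    have hee : e = e' := by
      have hsI : (s:ℂ) * Complex.I ≠ 0 := mul_ne_zero hsne Complex.I_ne_zero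
      apply mul_left_cancel₀ hsI
      linear_combination hent
    have : e * e = 1 := by rw [hee] at hee' ⊢; exact hee'
    rw [he, ← Complex.exp_add, Complex.exp_eq_one_iff] at this
    obtain ⟨m, hm⟩ := this
    apply hθ m
    have : ((θ₁ + θ₁ : ℝ) : ℂ) * I = ((m * (2*Real.pi) : ℝ) : ℂ) * I := by
      push_cast
      linear_combination hm
    have h2 := mul_right_cancel₀ Complex.I_ne_zero this
    have h3 : θ₁ + θ₁ = m * (2*Real.pi) := by exact_mod_cast h2
    linarith
  · rw [hρ1]; rfl
  · rw [hρ3]; rfl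
  · rw [hρ2]
    show B.trace = _
    rw [hB]
    simp [Matrix.trace_fin_two]
    ring
end

section
/- Let n ≥ 1, and for i = 1,…,n let p_i ≥ 2 and q_i be integers with gcd(p_i, q_i) = 1. Let G = ⟨x₁,…,x_n, y, z, h | [x_i,h] = 1, x₁⋯x_n·y·z² = 1, zhz⁻¹h = 1, x_i^{p_i}h^{q_i} = 1⟩. Then the torsion subgroup of the abelianization of G has order 2·p₁⋯p_n, and the image of h in the abelianization has order exactly 2. -/
/-- Relations of the group
`⟨x₁,…,x_n, y, z, h | [x_i,h], x₁⋯x_n·y·z², zhz⁻¹h, x_i^{p_i}h^{q_i}⟩`,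
with generators `Sum.inl i = x_i`, `Sum.inr 0 = y`, `Sum.inr 1 = z`, `Sum.inr 2 = h`. -/
def mobiusRels (n : ℕ) (p : Fin n → ℕ) (q : Fin n → ℤ) :
    Set (FreeGroup (Fin n ⊕ Fin 3)) :=
  (Set.range fun i : Fin n =>
      FreeGroup.of (Sum.inl i) * FreeGroup.of (Sum.inr 2) *
        (FreeGroup.of (Sum.inl i))⁻¹ * (FreeGroup.of (Sum.inr 2))⁻¹) ∪
  { (List.ofFn fun i : Fin n => FreeGroup.of (Sum.inl i)).prod *
      FreeGroup.of (Sum.inr 0) * FreeGroup.of (Sum.inr 1) ^ 2,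
    FreeGroup.of (Sum.inr 1) * FreeGroup.of (Sum.inr 2) *
      (FreeGroup.of (Sum.inr 1))⁻¹ * FreeGroup.of (Sum.inr 2) } ∪
  (Set.range fun i : Fin n =>
      FreeGroup.of (Sum.inl i) ^ (p i) * FreeGroup.of (Sum.inr 2) ^ (q i))


/-!
In the abelianization the relation `z h z⁻¹ h` becomes `h² = 1` and `y = (x₁⋯xₙ z²)⁻¹`, so the
group is generated by `z` and `K = ⟨x_i, h⟩`. The homomorphism to `ℤ` with `z ↦ 1`, `y ↦ -2`
kills `K`, so the torsion lies in `K`; conversely `x_i^{2p_i} = h^{-2q_i} = 1`, so `K` is the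
torsion subgroup. Reducing the exponents of the `x_i` modulo `p_i` maps `K` onto `∏ ℤ/p_i` with
kernel `⟨h⟩`, and `h ≠ 1` because the homomorphism to `ℤ/2P`, `P = ∏ p_i`, with `h ↦ P` and
`x_i ↦ -q_i P/p_i` detects it. Hence `|K| = 2P`.
-/

@[simp]
theorem PresentedGroup.mk_of {α : Type*} (rels : Set (FreeGroup α)) (a : α) :
    PresentedGroup.mk rels (FreeGroup.of a) = PresentedGroup.of a :=
  rfl

theorem MonoidHom.card_eq_card_ker_mul_card_of_surjective {G H : Type*} [Group G] [Group H]
    (f : G →* H) (hf : Function.Surjective f) : Nat.card G = Nat.card f.ker * Nat.card H := by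
  rw [← f.ker.card_mul_index, Subgroup.index_ker, MonoidHom.range_eq_top.2 hf,
    Subgroup.card_top]

abbrev MobiusAb (n : ℕ) (p : Fin n → ℕ) (q : Fin n → ℤ) : Type :=
  Abelianization (PresentedGroup (mobiusRels n p q))

namespace MobiusAb

variable (n : ℕ) (p : Fin n → ℕ) (q : Fin n → ℤ)

def genX (i : Fin n) : MobiusAb n p q := Abelianization.of (PresentedGroup.of (Sum.inl i))

def genY : MobiusAb n p q := Abelianization.of (PresentedGroup.of (Sum.inr 0))

def genZ : MobiusAb n p q := Abelianization.of (PresentedGroup.of (Sum.inr 1))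

def genH : MobiusAb n p q := Abelianization.of (PresentedGroup.of (Sum.inr 2))

variable {n p q} in
theorem of_mk_eq_one {r : FreeGroup (Fin n ⊕ Fin 3)} (hr : r ∈ mobiusRels n p q) :
    Abelianization.of (PresentedGroup.mk (mobiusRels n p q) r) = 1 := by
  rw [PresentedGroup.one_of_mem hr, map_one]

theorem prod_genX_mul_genY_mul_genZ_sq :
    (∏ i, genX n p q i) * genY n p q * genZ n p q ^ 2 = 1 := by
  have := of_mk_eq_one (Or.inl (Or.inr (Set.mem_insert _ _)) : _ ∈ mobiusRels n p q)
  simpa [map_list_prod, List.map_ofFn, Function.comp_def, List.prod_ofFn, genX, genY, genZ]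
    using this

theorem genH_sq : genH n p q ^ 2 = 1 := by
  have := of_mk_eq_one (Or.inl (Or.inr (Set.mem_insert_of_mem _ rfl)) : _ ∈ mobiusRels n p q)
  simpa [mul_comm, sq, genH] using this

theorem genX_pow_mul_genH_zpow (i : Fin n) : genX n p q i ^ p i * genH n p q ^ q i = 1 :=
  of_mk_eq_one (Or.inr ⟨i, rfl⟩ : _ ∈ mobiusRels n p q)

section Lift

variable {n p q} {M : Type*} [CommGroup M] (fx : Fin n → M) (fy fz fh : M)
  (hprod : (∏ i, fx i) * fy * fz ^ 2 = 1) (hfiber : fh ^ 2 = 1)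
  (hexc : ∀ i, fx i ^ p i * fh ^ q i = 1)

def lift : MobiusAb n p q →* M :=
  Abelianization.lift <| PresentedGroup.toGroup (f := Sum.elim fx ![fy, fz, fh]) <| by
    rintro r ((⟨i, rfl⟩ | rfl | rfl) | ⟨i, rfl⟩) <;>
      simp only [map_mul, map_inv, map_pow, map_zpow, map_list_prod, List.map_ofFn,
        Function.comp_def, List.prod_ofFn, FreeGroup.lift_apply_of]
    · simp [mul_comm]
    · simpa using hprod
    · simpa [mul_comm, sq] using hfiber
    · simpa using hexc i

@[simp]
theorem lift_genX (i : Fin n) : lift fx fy fz fh hprod hfiber hexc (genX n p q i) = fx i := by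
  simp [lift, genX, PresentedGroup.toGroup.of]

@[simp]
theorem lift_genY : lift fx fy fz fh hprod hfiber hexc (genY n p q) = fy := by
  simp [lift, genY, PresentedGroup.toGroup.of]

@[simp]
theorem lift_genZ : lift fx fy fz fh hprod hfiber hexc (genZ n p q) = fz := by
  simp [lift, genZ, PresentedGroup.toGroup.of]

@[simp]
theorem lift_genH : lift fx fy fz fh hprod hfiber hexc (genH n p q) = fh := by
  simp [lift, genH, PresentedGroup.toGroup.of]

end Lift

open Subgroup Multiplicative

def degree : MobiusAb n p q →* Multiplicative ℤ :=
  lift (fun _ => 1) (ofAdd (-2)) (ofAdd 1) 1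
    (by apply toAdd.injective; simp) (one_pow 2) (fun _ => by simp)

def residues : MobiusAb n p q →* ∀ i, Multiplicative (ZMod (p i)) :=
  lift (fun i => Pi.mulSingle i (ofAdd 1)) (∏ i, Pi.mulSingle i (ofAdd 1))⁻¹ 1 1
    (by simp) (one_pow 2)
    (fun i => by
      rw [one_zpow, mul_one, ← Pi.mulSingle_pow, ← ofAdd_nsmul, nsmul_one, ZMod.natCast_self,
        ofAdd_zero, Pi.mulSingle_one])

def detectH : MobiusAb n p q →* Multiplicative (ZMod (2 * ∏ i, p i)) :=
  lift (fun i => ofAdd (-(q i * (∏ j ∈ Finset.univ.erase i, p j : ℕ))))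
    (ofAdd (∑ i, q i * (∏ j ∈ Finset.univ.erase i, p j : ℕ))) 1 (ofAdd (∏ i, p i : ℕ))
    (by apply toAdd.injective; simp)
    (by
      apply toAdd.injective
      simpa [two_nsmul, two_mul] using ZMod.natCast_self (2 * ∏ i, p i))
    (fun i => by
      apply toAdd.injective
      have hP : ((p i * ∏ j ∈ Finset.univ.erase i, p j : ℕ) : ZMod (2 * ∏ i, p i)) =
          (∏ j, p j : ℕ) := by
        rw [Finset.mul_prod_erase _ _ (Finset.mem_univ i)]
      push_cast at hP
      simp only [toAdd_mul, toAdd_pow, toAdd_zpow, toAdd_ofAdd, toAdd_one, nsmul_eq_mul,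
        zsmul_eq_mul]
      push_cast
      linear_combination (-(q i : ZMod (2 * ∏ i, p i))) * hP)

theorem genH_ne_one (hp : ∀ i, p i ≠ 0) : genH n p q ≠ 1 := by
  intro h
  have hP : ((∏ i, p i : ℕ) : ZMod (2 * ∏ i, p i)) = 0 := by
    simpa [detectH] using congrArg (toAdd ∘ detectH n p q) h
  have hpos : 0 < ∏ i, p i := Finset.prod_pos fun i _ => Nat.pos_of_ne_zero (hp i)
  have := Nat.le_of_dvd hpos ((ZMod.natCast_eq_zero_iff _ _).1 hP)
  omega

theorem orderOf_genH (hp : ∀ i, p i ≠ 0) : orderOf (genH n p q) = 2 :=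
  orderOf_eq_prime (genH_sq n p q) (genH_ne_one n p q hp)

def fiberSubgroup : Subgroup (MobiusAb n p q) :=
  closure (Set.range (genX n p q)) ⊔ zpowers (genH n p q)

theorem genH_mem_fiberSubgroup : genH n p q ∈ fiberSubgroup n p q :=
  mem_sup_right (mem_zpowers _)

theorem genX_mem_fiberSubgroup (i : Fin n) : genX n p q i ∈ fiberSubgroup n p q :=
  mem_sup_left (subset_closure ⟨i, rfl⟩)

theorem fiberSubgroup_sup_zpowers_genZ : fiberSubgroup n p q ⊔ zpowers (genZ n p q) = ⊤ := by
  have hsurj : Function.Surjective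
      (Abelianization.of : PresentedGroup (mobiusRels n p q) →* MobiusAb n p q) :=
    QuotientGroup.mk_surjective
  rw [eq_top_iff, ← MonoidHom.range_eq_top.2 hsurj, MonoidHom.range_eq_map,
    ← PresentedGroup.closure_range_of, MonoidHom.map_closure, closure_le]
  rintro _ ⟨_, ⟨i | j, rfl⟩, rfl⟩
  · exact mem_sup_left (genX_mem_fiberSubgroup n p q i)
  fin_cases j
  · change genY n p q ∈ _
    have hy : genY n p q = ((∏ i, genX n p q i) * genZ n p q ^ 2)⁻¹ := by
      rw [eq_inv_iff_mul_eq_one, ← prod_genX_mul_genY_mul_genZ_sq n p q, mul_right_comm,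
        mul_comm]
    refine hy ▸ inv_mem (mul_mem (mem_sup_left (prod_mem fun i _ => ?_))
      (mem_sup_right (pow_mem (mem_zpowers _) 2)))
    exact genX_mem_fiberSubgroup n p q i
  · exact mem_sup_right (mem_zpowers _)
  · exact mem_sup_left (genH_mem_fiberSubgroup n p q)

theorem fiberSubgroup_le_ker_degree : fiberSubgroup n p q ≤ (degree n p q).ker :=
  sup_le ((closure_le _).2 (by rintro _ ⟨i, rfl⟩; simp [degree]))
    (zpowers_le.2 (by simp [degree]))

theorem torsion_le_fiberSubgroup : CommGroup.torsion (MobiusAb n p q) ≤ fiberSubgroup n p q := by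
  intro a ha
  obtain ⟨k, hk, _, ⟨l, rfl⟩, rfl⟩ :=
    mem_sup.1 (fiberSubgroup_sup_zpowers_genZ n p q ▸ mem_top a)
  have hdeg : degree n p q (k * genZ n p q ^ l) = ofAdd l := by
    rw [map_mul, fiberSubgroup_le_ker_degree n p q hk, one_mul, map_zpow]
    simp [degree, ← ofAdd_zsmul]
  have hl : l = 0 := by
    simpa [hdeg] using ((degree n p q).isOfFinOrder ha).eq_one'
  simpa [hl] using hk

theorem isOfFinOrder_genX (hp : ∀ i, p i ≠ 0) (i : Fin n) : IsOfFinOrder (genX n p q i) := by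
  refine isOfFinOrder_iff_pow_eq_one.2 ⟨p i * 2, by positivity [hp i], ?_⟩
  rw [pow_mul, eq_inv_of_mul_eq_one_left (genX_pow_mul_genH_zpow n p q i), inv_pow,
    ← zpow_natCast, ← zpow_mul, mul_comm, zpow_mul, zpow_natCast, genH_sq, one_zpow, inv_one]

theorem torsion_eq_fiberSubgroup (hp : ∀ i, p i ≠ 0) :
    CommGroup.torsion (MobiusAb n p q) = fiberSubgroup n p q := by
  refine le_antisymm (torsion_le_fiberSubgroup n p q) (sup_le ?_ ?_)
  · exact (closure_le _).2 (by rintro _ ⟨i, rfl⟩; exact isOfFinOrder_genX n p q hp i)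
  · exact zpowers_le.2 (isOfFinOrder_iff_pow_eq_one.2 ⟨2, two_pos, genH_sq n p q⟩)

theorem residues_prod_genX_zpow (m : Fin n → ℤ) :
    residues n p q (∏ i, genX n p q i ^ m i) = fun i => ofAdd (m i : ZMod (p i)) := by
  have hX (i : Fin n) :
      residues n p q (genX n p q i ^ m i) = Pi.mulSingle i (ofAdd (m i : ZMod (p i))) := by
    simp [residues, ← Pi.mulSingle_zpow, ← ofAdd_zsmul]
  simp only [map_prod, hX, Finset.univ_prod_mulSingle]

theorem mem_zpowers_genH_of_residues_eq_one {a : MobiusAb n p q} (ha : a ∈ fiberSubgroup n p q)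
    (hres : residues n p q a = 1) : a ∈ zpowers (genH n p q) := by
  obtain ⟨b, hb, _, ⟨k, rfl⟩, rfl⟩ := mem_sup.1 ha
  obtain ⟨m, rfl⟩ := (mem_closure_range_iff_of_fintype).1 hb
  have hm : ∀ i, (p i : ℤ) ∣ m i := fun i => by
    have := congrFun hres i
    simp only [map_mul, map_zpow, residues_prod_genX_zpow] at this
    simpa [residues, ← ZMod.intCast_zmod_eq_zero_iff_dvd] using this
  refine mul_mem (prod_mem fun i _ => ?_) (zpow_mem (mem_zpowers _) k)
  obtain ⟨c, hc⟩ := hm i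
  rw [hc, zpow_mul, zpow_natCast, eq_inv_of_mul_eq_one_left (genX_pow_mul_genH_zpow n p q i)]
  exact zpow_mem (inv_mem (zpow_mem (mem_zpowers _) _)) c

theorem card_fiberSubgroup (hp : ∀ i, p i ≠ 0) :
    Nat.card (fiberSubgroup n p q) = 2 * ∏ i, p i := by
  set f := (residues n p q).comp (fiberSubgroup n p q).subtype
  set h₀ : fiberSubgroup n p q := ⟨genH n p q, genH_mem_fiberSubgroup n p q⟩
  have hker : f.ker = zpowers h₀ := by
    refine le_antisymm (fun a ha => ?_) (zpowers_le.2 (by simp [f, h₀, residues]))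
    obtain ⟨k, hk⟩ := mem_zpowers_genH_of_residues_eq_one n p q a.2 ha
    exact ⟨k, Subtype.ext hk⟩
  have hsurj : Function.Surjective f := fun g => by
    choose m hm using fun i => ZMod.intCast_surjective (n := p i) (toAdd (g i))
    refine ⟨⟨∏ i, genX n p q i ^ m i,
      prod_mem fun i _ => zpow_mem (genX_mem_fiberSubgroup n p q i) _⟩, funext fun i => ?_⟩
    change residues n p q (∏ i, genX n p q i ^ m i) i = g i
    rw [residues_prod_genX_zpow]
    exact (congrArg ofAdd (hm i)).trans (ofAdd_toAdd _)
  rw [f.card_eq_card_ker_mul_card_of_surjective hsurj, hker, Nat.card_zpowers, orderOf_mk,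
    orderOf_genH n p q hp, Nat.card_pi]
  exact congrArg (2 * ·) <|
    Finset.prod_congr rfl fun i _ => (Nat.card_congr toAdd).trans (Nat.card_zmod _)

end MobiusAb

theorem mobius_abelianization_torsion_general (n : ℕ)
    (p : Fin n → ℕ) (hp : ∀ i, 2 ≤ p i) (q : Fin n → ℤ) :
    Nat.card (CommGroup.torsion (Abelianization (PresentedGroup (mobiusRels n p q)))) =
        2 * ∏ i, p i ∧
    orderOf (Abelianization.of
        (PresentedGroup.of (Sum.inr 2) : PresentedGroup (mobiusRels n p q))) = 2 := by
  have hp₀ : ∀ i, p i ≠ 0 := fun i => (zero_lt_two.trans_le (hp i)).ne'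
  exact ⟨MobiusAb.torsion_eq_fiberSubgroup n p q hp₀ ▸ MobiusAb.card_fiberSubgroup n p q hp₀,
    MobiusAb.orderOf_genH n p q hp₀⟩

/-- For the fundamental group `G` of a Seifert fibered space over a once-punctured `ℝP²`
with `n ≥ 1` singular fibers of orders `p₁,…,p_n`, the torsion subgroup of the
abelianization of `G` has order `2·p₁⋯p_n`, and the image of `h` in the abelianization
has order exactly `2`. -/
theorem mobius_abelianization_torsion (n : ℕ) (hn : 1 ≤ n)
    (p : Fin n → ℕ) (hp : ∀ i, 2 ≤ p i) (q : Fin n → ℤ)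
    (hpq : ∀ i, IsCoprime (p i : ℤ) (q i)) :
    Nat.card (CommGroup.torsion (Abelianization (PresentedGroup (mobiusRels n p q)))) =
        2 * ∏ i, p i ∧
    orderOf (Abelianization.of
        (PresentedGroup.of (Sum.inr 2) : PresentedGroup (mobiusRels n p q))) = 2 :=
  mobius_abelianization_torsion_general n p hp q
end
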